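/- arXiv:2110.07074 — 5 statements merged into one kernel-verified Lean document; each statement's English description precedes it below -/
import Mathlib

section
/- If linear maps Ψ_i : H → K satisfy ∑_i Ψ_i ρ Ψ_i† = F ρ F† for all ρ, then each Ψ_i is a scalar multiple of F: there exist complex numbers c_i with Ψ_i = c_i F and ∑_i |c_i|² = 1 (assuming F ≠ 0). -/
/-!
Evaluating the hypothesis at the matrix units `ρ = E_ab` shows that the vectors
`v_(p,a) = (Ψ_i p a)_i ∈ ℂ^ι` have the rank-one Gram matrix `⟪v_x, v_y⟫ = conj (F x) * F y`.
Normalising one of them at an entry `F x₀ ≠ 0` gives a unit vector `u` with `⟪u, v_y⟫ = F y`,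
and then `‖v_x - F x • u‖² = 0` expands to `|F x|² - 2 |F x|² + |F x|²`. The coordinates
of `u` are the scalars `c_i`.
-/

open Matrix

section GramRankOne

open ComplexConjugate

variable {𝕜 E X : Type*} [RCLike 𝕜] [NormedAddCommGroup E] [InnerProductSpace 𝕜 E]

theorem exists_norm_eq_one_of_inner_eq_conj_mul {v : X → E} {f : X → 𝕜} (hf : f ≠ 0)
    (hv : ∀ x y, inner 𝕜 (v x) (v y) = conj (f x) * f y) :
    ∃ u : E, ‖u‖ = 1 ∧ ∀ x, v x = f x • u := by
  obtain ⟨x₀, hx₀⟩ : ∃ x, f x ≠ 0 := Function.ne_iff.mp hf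
  set u := (f x₀)⁻¹ • v x₀
  have hu : ∀ y, inner 𝕜 u (v y) = f y := fun y => by
    rw [inner_smul_left, hv, map_inv₀, inv_mul_cancel_left₀ ((map_ne_zero _).mpr hx₀)]
  have hu' : ∀ y, inner 𝕜 (v y) u = conj (f y) := fun y => by rw [← inner_conj_symm, hu]
  have huu : inner 𝕜 u u = 1 := by
    rw [inner_smul_right, hu, inv_mul_cancel₀ hx₀]
  refine ⟨u, ?_, fun x => ?_⟩
  · have : (‖u‖ : 𝕜) ^ 2 = 1 := by rw [← inner_self_eq_norm_sq_to_K, huu]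
    exact (pow_eq_one_iff_of_nonneg (norm_nonneg u) two_ne_zero).mp (mod_cast this)
  · rw [← sub_eq_zero, ← inner_self_eq_zero (𝕜 := 𝕜)]
    simp only [inner_sub_left, inner_sub_right, inner_smul_left, inner_smul_right, hv, hu, hu',
      huu]
    ring

end GramRankOne

theorem Matrix.mul_single_one_mul_conjTranspose_apply {α h k : Type*} [Semiring α] [StarRing α]
    [Fintype h] [DecidableEq h] (A B : Matrix k h α) (a b : h) (p q : k) :
    (A * single a b (1 : α) * Bᴴ) p q = A p a * star (B q b) := by
  simp [mul_apply, single_apply, ite_and]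

theorem sum_mul_star_eq_of_sum_mul_mul_conjTranspose {α h k ι : Type*} [Semiring α] [StarRing α]
    [Fintype h] [Fintype k] [Fintype ι] {Ψ : ι → Matrix k h α} {F : Matrix k h α}
    (hsum : ∀ ρ : Matrix h h α, ∑ i, Ψ i * ρ * (Ψ i)ᴴ = F * ρ * Fᴴ) (p q : k) (a b : h) :
    ∑ i, Ψ i p a * star (Ψ i q b) = F p a * star (F q b) := by
  classical
  simpa [Matrix.sum_apply, mul_single_one_mul_conjTranspose_apply] using
    congrFun₂ (hsum (single a b (1 : α))) p q

/-- If `∑ i, Ψ i ρ (Ψ i)† = F ρ F†` for all `ρ` and `F ≠ 0`, then each `Ψ i` is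
a scalar multiple `c i • F` of `F`, with `∑ i, |c i|² = 1`. -/
theorem stmt2 {h k ι : Type*} [Fintype h] [Fintype k] [Fintype ι]
    (Ψ : ι → Matrix k h ℂ) (F : Matrix k h ℂ) (hF : F ≠ 0)
    (hsum : ∀ ρ : Matrix h h ℂ, ∑ i, Ψ i * ρ * (Ψ i)ᴴ = F * ρ * Fᴴ) :
    ∃ c : ι → ℂ, (∀ i, Ψ i = c i • F) ∧ ∑ i, ‖c i‖ ^ 2 = 1 := by
  have hF' : Function.uncurry F ≠ 0 := fun h0 => hF (ext fun p a => congrFun h0 (p, a))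
  obtain ⟨u, hu, hΨ⟩ := exists_norm_eq_one_of_inner_eq_conj_mul hF'
    (v := fun x => WithLp.toLp 2 fun i => Ψ i x.1 x.2) fun x y => by
      rw [EuclideanSpace.inner_toLp_toLp, dotProduct, mul_comm]
      exact sum_mul_star_eq_of_sum_mul_mul_conjTranspose hsum y.1 x.1 y.2 x.2
  refine ⟨fun i => u i, fun i => ext fun p a => ?_, ?_⟩
  · exact (congrArg (· i) (hΨ (p, a))).trans (mul_comm _ _)
  · rw [← EuclideanSpace.norm_sq_eq, hu, one_pow]
end

section
/- If (Δ, E) is a comonoid in the category of finite-dimensional Hilbert spaces and CP maps which is isometric (Δ† ∘ Δ = id, with Δ† the Hilbert–Schmidt adjoint) and satisfies the snake equations ((Δ† ⊗ id) ∘ (id ⊗ Δ) = id = (id ⊗ Δ†) ∘ (Δ ⊗ id)), then both Δ and E are pure CP maps, i.e. Δ(ρ) = δ ρ δ† and E(ρ) = ε ρ ε† for single linear maps δ : H → H ⊗ H and ε : H → ℂ. -/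
/-
A Kraus family of the identity channel consists of scalar multiples of the identity (compare the
entries of `∑ Kᵢ ρ Kᵢᴴ = ρ` for matrix units `ρ`). The two counit laws and the left snake equation
each present the identity channel by such a family: the operators `(eₖ ⊗ id) D_a`, `(id ⊗ eₖ) D_a`
and the snake composites of `D_a, D_b`. Feeding a nonzero `(e₀ ⊗ id) D₀ = f • 1` into the snake
yields `conj f • D_b = s_b • (e₀ ⊗ id)ᴴ`, so all Kraus operators of `Δ` are proportional to one
operator and `Δ` is pure. The right counit law then says that the rank-one matrices
`(id ⊗ eₖ)(e₀ ⊗ id)ᴴ = conj e₀ ⊗ eₖ` are scalars, so all `eₖ` are multiples of one basis vector and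
`E` is pure as well.
-/

open Matrix Kronecker BigOperators

/-- Kraus operator of `(Δ ⊗ id) ∘ Δ` from Kraus operators `A, B` of `Δ`. -/
noncomputable def coassocL {h : Type*} [Fintype h] [DecidableEq h]
    (A B : Matrix (h × h) h ℂ) : Matrix ((h × h) × h) h ℂ :=
  (A ⊗ₖ (1 : Matrix h h ℂ)) * B

/-- Kraus operator of `(id ⊗ Δ) ∘ Δ`, reassociated to `(H ⊗ H) ⊗ H`. -/
noncomputable def coassocR {h : Type*} [Fintype h] [DecidableEq h]
    (A B : Matrix (h × h) h ℂ) : Matrix ((h × h) × h) h ℂ :=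
  Matrix.reindex (Equiv.prodAssoc h h h).symm (Equiv.refl h)
    (((1 : Matrix h h ℂ) ⊗ₖ A) * B)

/-- Kraus operator of the left snake composite `(Δ† ⊗ id) ∘ (id ⊗ Δ)`. -/
noncomputable def snakeL {h : Type*} [Fintype h] [DecidableEq h]
    (A B : Matrix (h × h) h ℂ) : Matrix (h × h) (h × h) ℂ :=
  (Aᴴ ⊗ₖ (1 : Matrix h h ℂ)) *
    Matrix.reindex (Equiv.prodAssoc h h h).symm (Equiv.refl (h × h))
      ((1 : Matrix h h ℂ) ⊗ₖ B)

/-- Kraus operator of the right snake composite `(id ⊗ Δ†) ∘ (Δ ⊗ id)`. -/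
noncomputable def snakeR {h : Type*} [Fintype h] [DecidableEq h]
    (A B : Matrix (h × h) h ℂ) : Matrix (h × h) (h × h) ℂ :=
  ((1 : Matrix h h ℂ) ⊗ₖ Aᴴ) *
    Matrix.reindex (Equiv.prodAssoc h h h) (Equiv.refl (h × h))
      (B ⊗ₖ (1 : Matrix h h ℂ))


def IsKrausFamilyOfId {ι N : Type*} [Fintype ι] [Fintype N] [DecidableEq N]
    (K : ι → Matrix N N ℂ) : Prop :=
  ∀ ρ, ∑ i, K i * ρ * (K i)ᴴ = ρ

namespace IsKrausFamilyOfId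

variable {ι N : Type*} [Fintype ι] [Fintype N] [DecidableEq N] {K : ι → Matrix N N ℂ}

lemma sum_mul_star (hK : IsKrausFamilyOfId K) (x u y v : N) :
    ∑ i, K i x u * star (K i y v) = if x = u ∧ y = v then 1 else 0 := by
  have h := congrFun₂ (hK (Matrix.single u v 1)) x y
  simp only [Matrix.sum_apply, Matrix.mul_apply, Matrix.single_apply,
    Matrix.conjTranspose_apply] at h
  simpa [ite_and, eq_comm] using h

open scoped ComplexOrder in
lemma exists_eq_smul_one (hK : IsKrausFamilyOfId K) :
    ∃ c : ι → ℂ, ∀ i, K i = c i • (1 : Matrix N N ℂ) := by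
  cases isEmpty_or_nonempty N with
  | inl _ => exact ⟨0, fun _ => Subsingleton.elim _ _⟩
  | inr hN =>
    obtain ⟨x₀⟩ := hN
    have hdot : ∀ x u y v, (fun i => K i x u) ⬝ᵥ star (fun i => K i y v)
        = if x = u ∧ y = v then 1 else 0 := hK.sum_mul_star
    have hoff : ∀ p q, p ≠ q → (fun i => K i p q) = 0 := fun p q hpq =>
      dotProduct_self_star_eq_zero.mp (by simp [hdot, hpq])
    -- the squared norm of `i ↦ K i p p - K i x₀ x₀` is `1 - 1 - 1 + 1`
    have hdiag : ∀ p, (fun i => K i p p) = fun i => K i x₀ x₀ := fun p =>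
      sub_eq_zero.mp <| dotProduct_self_star_eq_zero.mp <| by
        simp only [star_sub, sub_dotProduct, dotProduct_sub, hdot]; simp
    refine ⟨fun i => K i x₀ x₀, fun i => Matrix.ext fun p q => ?_⟩
    by_cases hpq : p = q
    · subst hpq; simpa using congrFun (hdiag p) i
    · simpa [hpq] using congrFun (hoff p q hpq) i

lemma exists_ne_zero [Nonempty N] (hK : IsKrausFamilyOfId K) : ∃ i, K i ≠ 0 := by
  by_contra! h
  simpa [h] using (hK 1).symm

end IsKrausFamilyOfId

section Contraction

variable {ι : Type*} [Fintype ι]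

/-- The matrices of `w ⊗ id : ℂ^ι ⊗ ℂ^κ → ℂ^κ` and `id ⊗ w : ℂ^κ ⊗ ℂ^ι → ℂ^κ`, with `w` read as a
linear form (no complex conjugation). -/
def contractFst (κ : Type*) [DecidableEq κ] (w : ι → ℂ) : Matrix κ (ι × κ) ℂ :=
  Matrix.of fun x cz => if cz.2 = x then w cz.1 else 0

def contractSnd (κ : Type*) [DecidableEq κ] (w : ι → ℂ) : Matrix κ (κ × ι) ℂ :=
  Matrix.of fun x zc => if zc.1 = x then w zc.2 else 0

variable {κ : Type*} [Fintype κ] [DecidableEq κ]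

lemma contractFst_mul_mul_conjTranspose_apply (w : ι → ℂ) (M : Matrix (ι × κ) (ι × κ) ℂ)
    (x y : κ) :
    (contractFst κ w * M * (contractFst κ w)ᴴ) x y
      = ∑ c, ∑ d, w c * M (c, x) (d, y) * star (w d) := by
  simp only [contractFst, Matrix.mul_apply, of_apply, ite_mul, zero_mul, Fintype.sum_prod_type,
    Finset.sum_ite_eq', Finset.mem_univ, ↓reduceIte, conjTranspose_apply, RCLike.star_def,
    apply_ite (starRingEnd ℂ), map_zero, mul_ite, Finset.sum_mul, mul_assoc, mul_zero]
  exact Finset.sum_comm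

lemma contractSnd_mul_mul_conjTranspose_apply (w : ι → ℂ) (M : Matrix (κ × ι) (κ × ι) ℂ)
    (x y : κ) :
    (contractSnd κ w * M * (contractSnd κ w)ᴴ) x y
      = ∑ c, ∑ d, w c * M (x, c) (y, d) * star (w d) := by
  simp only [contractSnd, Matrix.mul_apply, of_apply, ite_mul, zero_mul, Fintype.sum_prod_type,
    Finset.sum_ite_irrel, Finset.sum_const_zero, Finset.sum_ite_eq', Finset.mem_univ, ↓reduceIte,
    conjTranspose_apply, RCLike.star_def, apply_ite (starRingEnd ℂ), map_zero, mul_ite,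
    Finset.sum_mul, mul_assoc, mul_zero]
  exact Finset.sum_comm

variable {n m : Type*} [Fintype n] [Fintype m]

lemma isKrausFamilyOfId_contractFst_mul (e : n → ι → ℂ) (D : m → Matrix (ι × κ) κ ℂ)
    (hcounit : ∀ ρ : Matrix κ κ ℂ, (Matrix.of fun x y => ∑ k, ∑ a, ∑ c, ∑ d,
      e k c * (D a * ρ * (D a)ᴴ) (c, x) (d, y) * star (e k d)) = ρ) :
    IsKrausFamilyOfId fun i : n × m => contractFst κ (e i.1) * D i.2 := by
  intro ρ
  conv_rhs => rw [← hcounit ρ]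
  ext x y
  simp only [Matrix.sum_apply, Fintype.sum_prod_type, of_apply, conjTranspose_mul,
    Matrix.mul_assoc, ← contractFst_mul_mul_conjTranspose_apply]

lemma isKrausFamilyOfId_contractSnd_mul (e : n → ι → ℂ) (D : m → Matrix (κ × ι) κ ℂ)
    (hcounit : ∀ ρ : Matrix κ κ ℂ, (Matrix.of fun x y => ∑ k, ∑ a, ∑ c, ∑ d,
      e k c * (D a * ρ * (D a)ᴴ) (x, c) (y, d) * star (e k d)) = ρ) :
    IsKrausFamilyOfId fun i : n × m => contractSnd κ (e i.1) * D i.2 := by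
  intro ρ
  conv_rhs => rw [← hcounit ρ]
  ext x y
  simp only [Matrix.sum_apply, Fintype.sum_prod_type, of_apply, conjTranspose_mul,
    Matrix.mul_assoc, ← contractSnd_mul_mul_conjTranspose_apply]

end Contraction

section Snake

variable {h : Type*} [Fintype h] [DecidableEq h]

lemma snakeL_mul_conjTranspose_contractFst (A B : Matrix (h × h) h ℂ) (w : h → ℂ) :
    snakeL A B * (contractFst h w)ᴴ = ((contractFst h w * A)ᴴ ⊗ₖ (1 : Matrix h h ℂ)) * B := by
  ext ⟨x, y⟩ v
  simp only [snakeL, reindex_apply, Equiv.symm_symm, Equiv.refl_symm, Equiv.coe_refl, contractFst,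
    Matrix.mul_apply, kroneckerMap_apply, conjTranspose_apply, RCLike.star_def, one_apply, mul_ite,
    mul_one, mul_zero, submatrix_apply, Equiv.prodAssoc_apply, id_eq, ite_mul, one_mul, zero_mul,
    Fintype.sum_prod_type, Finset.sum_ite_irrel, Finset.sum_ite_eq, Finset.mem_univ, ↓reduceIte,
    Finset.sum_const_zero, Finset.sum_ite_eq', of_apply, apply_ite (starRingEnd ℂ), map_zero,
    Finset.sum_mul, conjTranspose_mul]
  rw [Finset.sum_comm]
  exact Finset.sum_congr rfl fun _ _ => Finset.sum_congr rfl fun _ _ => by ring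

lemma contractFst_mul_conjTranspose_contractFst (v w : h → ℂ) :
    contractFst h v * (contractFst h w)ᴴ = (v ⬝ᵥ star w) • 1 := by
  ext x u
  simp [contractFst, dotProduct, Matrix.mul_apply, Fintype.sum_prod_type, one_apply,
    apply_ite (starRingEnd ℂ), mul_ite, ite_mul, Finset.sum_ite_irrel, eq_comm]

lemma contractSnd_mul_conjTranspose_contractFst (v w : h → ℂ) :
    contractSnd h v * (contractFst h w)ᴴ = vecMulVec (star w) v := by
  ext x u
  simp [contractSnd, contractFst, vecMulVec, Matrix.mul_apply, Fintype.sum_prod_type,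
    apply_ite (starRingEnd ℂ), mul_ite, ite_mul, mul_comm]

lemma eq_smul_conjTranspose_contractFst_of_snakeL {A B : Matrix (h × h) h ℂ} {w : h → ℂ}
    {f s : ℂ} (hA : contractFst h w * A = f • 1) (hf : f ≠ 0) (hAB : snakeL A B = s • 1) :
    B = (s / star f) • (contractFst h w)ᴴ := by
  have hsnake := snakeL_mul_conjTranspose_contractFst A B w
  simp only [hAB, hA, conjTranspose_smul, conjTranspose_one, smul_kronecker, one_kronecker_one,
    Matrix.smul_mul, Matrix.one_mul] at hsnake
  rw [div_eq_inv_mul, mul_smul, hsnake, smul_smul, inv_mul_cancel₀ (star_ne_zero.mpr hf),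
    one_smul]

end Snake

lemma eq_smul_pi_single_of_vecMulVec_eq_smul_one {h : Type*} [DecidableEq h] {a b : h → ℂ}
    {c : ℂ} {x₁ : h} (hab : vecMulVec a b = c • 1) (ha : a x₁ ≠ 0) :
    b = (c / a x₁) • Pi.single x₁ 1 := by
  funext u
  have hu := congrFun₂ hab x₁ u
  simp only [vecMulVec_apply, Matrix.smul_apply, one_apply, smul_eq_mul, mul_ite, mul_one,
    mul_zero] at hu
  rcases eq_or_ne u x₁ with rfl | hux
  · rw [Pi.smul_apply, Pi.single_eq_same, smul_eq_mul, mul_one, eq_div_iff ha, mul_comm]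
    simpa using hu
  · simp [hux, (mul_eq_zero.mp (hu.trans (if_neg hux.symm))).resolve_left ha]

lemma exists_sum_star_mul_self_eq_star_mul_self {ι : Type*} [Fintype ι] (μ : ι → ℂ) :
    ∃ r : ℂ, ∑ i, star (μ i) * μ i = star r * r := by
  refine ⟨(√(∑ i, Complex.normSq (μ i)) : ℝ), ?_⟩
  rw [Complex.star_def, Complex.conj_ofReal, ← Complex.ofReal_mul,
    Real.mul_self_sqrt (Finset.sum_nonneg fun i _ => Complex.normSq_nonneg (μ i))]
  simp [Complex.normSq_eq_conj_mul_self]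

lemma exists_sum_sandwich_smul_eq_sandwich {α β ι : Type*} [Fintype β] [Fintype ι]
    (K : Matrix α β ℂ) (μ : ι → ℂ) :
    ∃ δ : Matrix α β ℂ, ∀ ρ : Matrix β β ℂ, ∑ i, (μ i • K) * ρ * (μ i • K)ᴴ = δ * ρ * δᴴ := by
  obtain ⟨r, hr⟩ := exists_sum_star_mul_self_eq_star_mul_self μ
  refine ⟨r • K, fun ρ => ?_⟩
  simp only [conjTranspose_smul, Matrix.smul_mul, Matrix.mul_smul, smul_smul, ← Finset.sum_smul,
    hr]

lemma exists_sum_sesq_smul_eq_sesq {h ι : Type*} [Fintype h] [Fintype ι] (w : h → ℂ)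
    (ν : ι → ℂ) : ∃ ε : h → ℂ, ∀ ρ : Matrix h h ℂ,
      ∑ k, ∑ x, ∑ y, (ν k • w) x * ρ x y * star ((ν k • w) y)
        = ∑ x, ∑ y, ε x * ρ x y * star (ε y) := by
  obtain ⟨r, hr⟩ := exists_sum_star_mul_self_eq_star_mul_self ν
  refine ⟨r • w, fun ρ => ?_⟩
  have hscale : ∀ c : ℂ, ∑ x, ∑ y, (c • w) x * ρ x y * star ((c • w) y)
      = star c * c * ∑ x, ∑ y, w x * ρ x y * star (w y) := fun c => by
    simp only [Pi.smul_apply, smul_eq_mul, star_mul', Finset.mul_sum]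
    exact Finset.sum_congr rfl fun _ _ => Finset.sum_congr rfl fun _ _ => by ring
  simp only [hscale, ← Finset.sum_mul, hr]

theorem stmt6_general {h : Type*} [Fintype h] [DecidableEq h]
    (Δ : Matrix h h ℂ → Matrix (h × h) (h × h) ℂ)
    (E : Matrix h h ℂ → ℂ)
    (m n : ℕ) (D : Fin m → Matrix (h × h) h ℂ) (e : Fin n → h → ℂ)
    (hΔ : ∀ ρ, Δ ρ = ∑ a, D a * ρ * (D a)ᴴ)
    (hE : ∀ ρ, E ρ = ∑ kk, ∑ x, ∑ y, e kk x * ρ x y * star (e kk y))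
    (hcounitL : ∀ ρ : Matrix h h ℂ,
      (Matrix.of fun x y => ∑ kk, ∑ a, ∑ c, ∑ d,
        e kk c * (D a * ρ * (D a)ᴴ) (c, x) (d, y) * star (e kk d)) = ρ)
    (hcounitR : ∀ ρ : Matrix h h ℂ,
      (Matrix.of fun x y => ∑ kk, ∑ a, ∑ c, ∑ d,
        e kk c * (D a * ρ * (D a)ᴴ) (x, c) (y, d) * star (e kk d)) = ρ)
    (hsnakeL : ∀ ρ : Matrix (h × h) (h × h) ℂ,
      ∑ a, ∑ b, snakeL (D a) (D b) * ρ * (snakeL (D a) (D b))ᴴ = ρ) :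
    (∃ δ : Matrix (h × h) h ℂ, ∀ ρ, Δ ρ = δ * ρ * δᴴ) ∧
    (∃ ε : h → ℂ, ∀ ρ, E ρ = ∑ x, ∑ y, ε x * ρ x y * star (ε y)) := by
  cases isEmpty_or_nonempty h
  · exact ⟨⟨0, fun _ => Subsingleton.elim _ _⟩, ⟨0, fun ρ => by simp [hE]⟩⟩
  have hF := isKrausFamilyOfId_contractFst_mul e D hcounitL
  obtain ⟨f, hf⟩ := hF.exists_eq_smul_one
  obtain ⟨g, hg⟩ := (isKrausFamilyOfId_contractSnd_mul e D hcounitR).exists_eq_smul_one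
  have hS : IsKrausFamilyOfId fun ab : Fin m × Fin m => snakeL (D ab.1) (D ab.2) := fun ρ => by
    rw [Fintype.sum_prod_type, hsnakeL]
  obtain ⟨s, hs⟩ := hS.exists_eq_smul_one
  obtain ⟨⟨k₀, a₀⟩, hne⟩ := hF.exists_ne_zero
  have hf₀ : f (k₀, a₀) ≠ 0 := fun h0 => hne (by rw [hf, h0, zero_smul])
  obtain ⟨μ, hD⟩ : ∃ μ : Fin m → ℂ, ∀ b, D b = μ b • (contractFst h (e k₀))ᴴ :=
    ⟨fun b => s (a₀, b) / star (f (k₀, a₀)), fun b =>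
      eq_smul_conjTranspose_contractFst_of_snakeL (hf (k₀, a₀)) hf₀ (hs (a₀, b))⟩
  -- `(e k₀ ⊗ id) * D a₀ ≠ 0` rules out both `μ a₀ = 0` and `e k₀ = 0`.
  obtain ⟨x₁, hx₁⟩ : ∃ x₁, (μ a₀ • star (e k₀)) x₁ ≠ 0 := by
    by_contra! h0
    refine hne ?_
    show contractFst h (e k₀) * D a₀ = 0
    rw [hD a₀, Matrix.mul_smul, contractFst_mul_conjTranspose_contractFst, smul_smul,
      ← smul_eq_mul, ← dotProduct_smul, (funext h0 : μ a₀ • star (e k₀) = 0), dotProduct_zero, zero_smul]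
  obtain ⟨ν, he⟩ : ∃ ν : Fin n → ℂ, ∀ k, e k = ν k • Pi.single x₁ 1 :=
    ⟨_, fun k => eq_smul_pi_single_of_vecMulVec_eq_smul_one (by
      rw [smul_vecMulVec, ← contractSnd_mul_conjTranspose_contractFst, ← Matrix.mul_smul,
        ← hD, hg (k, a₀)]) hx₁⟩
  obtain ⟨δ, hδ⟩ := exists_sum_sandwich_smul_eq_sandwich (contractFst h (e k₀))ᴴ μ
  obtain ⟨ε, hε⟩ := exists_sum_sesq_smul_eq_sesq (Pi.single x₁ 1) ν
  exact ⟨⟨δ, fun ρ => by rw [hΔ, ← hδ]; simp only [hD]⟩,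
    ⟨ε, fun ρ => by rw [hE, ← hε]; simp only [he]⟩⟩

/-- Ophidian isometric CP comonoids are pure: if `(Δ, E)` is a CP comonoid on a
finite-dimensional Hilbert space (given by Kraus decompositions) which is
isometric (`Δ† ∘ Δ = id`) and satisfies the snake equations, then both `Δ` and
`E` are pure, i.e. conjugations by single linear maps `δ : H → H ⊗ H` and
`ε : H → ℂ`. -/
theorem stmt6 {h : Type*} [Fintype h] [DecidableEq h]
    (Δ : Matrix h h ℂ → Matrix (h × h) (h × h) ℂ)
    (E : Matrix h h ℂ → ℂ)
    (m n : ℕ) (D : Fin m → Matrix (h × h) h ℂ) (e : Fin n → h → ℂ)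
    (hΔ : ∀ ρ, Δ ρ = ∑ a, D a * ρ * (D a)ᴴ)
    (hE : ∀ ρ, E ρ = ∑ kk, ∑ x, ∑ y, e kk x * ρ x y * star (e kk y))
    (hcoassoc : ∀ ρ : Matrix h h ℂ,
      ∑ a, ∑ b, coassocL (D a) (D b) * ρ * (coassocL (D a) (D b))ᴴ
        = ∑ a, ∑ b, coassocR (D a) (D b) * ρ * (coassocR (D a) (D b))ᴴ)
    (hcounitL : ∀ ρ : Matrix h h ℂ,
      (Matrix.of fun x y => ∑ kk, ∑ a, ∑ c, ∑ d,
        e kk c * (D a * ρ * (D a)ᴴ) (c, x) (d, y) * star (e kk d)) = ρ)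
    (hcounitR : ∀ ρ : Matrix h h ℂ,
      (Matrix.of fun x y => ∑ kk, ∑ a, ∑ c, ∑ d,
        e kk c * (D a * ρ * (D a)ᴴ) (x, c) (y, d) * star (e kk d)) = ρ)
    (hisometric : ∀ ρ : Matrix h h ℂ,
      ∑ a, ∑ b, (D a)ᴴ * (D b * ρ * (D b)ᴴ) * D a = ρ)
    (hsnakeL : ∀ ρ : Matrix (h × h) (h × h) ℂ,
      ∑ a, ∑ b, snakeL (D a) (D b) * ρ * (snakeL (D a) (D b))ᴴ = ρ)
    (hsnakeR : ∀ ρ : Matrix (h × h) (h × h) ℂ,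
      ∑ a, ∑ b, snakeR (D a) (D b) * ρ * (snakeR (D a) (D b))ᴴ = ρ) :
    (∃ δ : Matrix (h × h) h ℂ, ∀ ρ, Δ ρ = δ * ρ * δᴴ) ∧
    (∃ ε : h → ℂ, ∀ ρ, E ρ = ∑ x, ∑ y, ε x * ρ x y * star (ε y)) :=
  stmt6_general Δ E m n D e hΔ hE hcounitL hcounitR hsnakeL
end

section
/- If δ : H → H ⊗ H and ε : H → ℂ satisfy the left unit law exactly, associativity exactly, and the right unit law up to a phase ((id ⊗ ε) ∘ δ = e^{iρ}·id), then e^{iρ} = 1, i.e. the right unit law holds exactly. -/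
open Matrix Kronecker BigOperators

/-- `(ε ⊗ id) ∘ δ`. -/
noncomputable def leftUnit {h : Type*} [Fintype h]
    (δ : Matrix (h × h) h ℂ) (ε : h → ℂ) : Matrix h h ℂ :=
  Matrix.of fun x y => ∑ c, ε c * δ (c, x) y

/-- `(id ⊗ ε) ∘ δ`. -/
noncomputable def rightUnit {h : Type*} [Fintype h]
    (δ : Matrix (h × h) h ℂ) (ε : h → ℂ) : Matrix h h ℂ :=
  Matrix.of fun x y => ∑ c, ε c * δ (x, c) y

/-- If `δ, ε` satisfy the left unit law and associativity exactly, and the right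
unit law up to a phase `z` of modulus 1, then `z = 1`: the right unit law holds
exactly. -/
theorem stmt8 {h : Type*} [Fintype h] [DecidableEq h] [Nonempty h]
    (δ : Matrix (h × h) h ℂ) (ε : h → ℂ) (z : ℂ) (hz : ‖z‖ = 1)
    (hlu : leftUnit δ ε = 1)
    (hassoc : (δ ⊗ₖ (1 : Matrix h h ℂ)) * δ
      = Matrix.reindex (Equiv.prodAssoc h h h).symm (Equiv.refl h)
          (((1 : Matrix h h ℂ) ⊗ₖ δ) * δ))
    (hru : rightUnit δ ε = z • (1 : Matrix h h ℂ)) :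
    z = 1 := by
  -- entrywise consequences of hlu, hru
  have hlu' : ∀ x y, (∑ c, ε c * δ (c, x) y) = if x = y then 1 else 0 := by
    intro x y
    have := congrFun (congrFun hlu x) y
    simpa [leftUnit, Matrix.one_apply] using this
  have hru' : ∀ x y, (∑ c, ε c * δ (x, c) y) = z * (if x = y then 1 else 0) := by
    intro x y
    have := congrFun (congrFun hru x) y
    simpa [rightUnit, Matrix.one_apply] using this
  -- key: z * δ (a,c) y = δ (a,c) y
  have key : ∀ a c y, z * δ (a, c) y = δ (a, c) y := by
    intro a c y
    have hL : ∀ b, ((δ ⊗ₖ (1 : Matrix h h ℂ)) * δ) ((a, b), c) y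
        = ∑ p, δ (a, b) p * δ (p, c) y := by
      intro b
      rw [Matrix.mul_apply, Fintype.sum_prod_type]
      simp [Matrix.kroneckerMap_apply, Matrix.one_apply, ite_mul, mul_ite]
    have hR : ∀ b, (Matrix.reindex (Equiv.prodAssoc h h h).symm (Equiv.refl h)
        (((1 : Matrix h h ℂ) ⊗ₖ δ) * δ)) ((a, b), c) y
        = ∑ q, δ (b, c) q * δ (a, q) y := by
      intro b
      rw [Matrix.reindex_apply, Matrix.submatrix_apply, Matrix.mul_apply,
        Fintype.sum_prod_type]
      simp [Matrix.kroneckerMap_apply, Matrix.one_apply, ite_mul, mul_ite,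
        Equiv.prodAssoc]
    have hsum : (∑ b, ε b * ((δ ⊗ₖ (1 : Matrix h h ℂ)) * δ) ((a, b), c) y)
        = ∑ b, ε b * (Matrix.reindex (Equiv.prodAssoc h h h).symm (Equiv.refl h)
            (((1 : Matrix h h ℂ) ⊗ₖ δ) * δ)) ((a, b), c) y := by
      refine Finset.sum_congr rfl fun b _ => ?_
      rw [hassoc]
    simp only [hL, hR] at hsum
    have hLv : (∑ b, ε b * ∑ p, δ (a, b) p * δ (p, c) y) = z * δ (a, c) y := by
      calc (∑ b, ε b * ∑ p, δ (a, b) p * δ (p, c) y)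
          = ∑ p, (∑ b, ε b * δ (a, b) p) * δ (p, c) y := by
            simp_rw [Finset.mul_sum]
            rw [Finset.sum_comm]
            simp_rw [Finset.sum_mul, mul_assoc]
        _ = ∑ p, (z * (if a = p then 1 else 0)) * δ (p, c) y := by
            refine Finset.sum_congr rfl fun p _ => ?_
            rw [hru' a p]
        _ = z * δ (a, c) y := by simp [ite_mul, mul_ite]
    have hRv : (∑ b, ε b * ∑ q, δ (b, c) q * δ (a, q) y) = δ (a, c) y := by
      calc (∑ b, ε b * ∑ q, δ (b, c) q * δ (a, q) y)
          = ∑ q, (∑ b, ε b * δ (b, c) q) * δ (a, q) y := by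
            simp_rw [Finset.mul_sum]
            rw [Finset.sum_comm]
            simp_rw [Finset.sum_mul, mul_assoc]
        _ = ∑ q, ((if c = q then 1 else 0)) * δ (a, q) y := by
            refine Finset.sum_congr rfl fun q _ => ?_
            rw [hlu' c q]
        _ = δ (a, c) y := by simp [ite_mul]
    rw [hLv, hRv] at hsum
    exact hsum
  -- δ is nonzero somewhere
  obtain ⟨x⟩ := ‹Nonempty h›
  have h1 : (∑ c, ε c * δ (c, x) x) = 1 := by simpa using hlu' x x
  have hne : ∃ a c y, δ (a, c) y ≠ 0 := by
    by_contra hall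
    push_neg at hall
    simp [hall] at h1
  obtain ⟨a, c, y, hδ⟩ := hne
  have := key a c y
  have h2 : (z - 1) * δ (a, c) y = 0 := by linear_combination this
  rcases mul_eq_zero.mp h2 with h' | h'
  · exact sub_eq_zero.mp h'
  · exact absurd h' hδ
end

section
/- If δ : H → H ⊗ H and ε : H → ℂ satisfy the left and right unit laws exactly, and symmetry up to a phase (σ_{H,H} ∘ δ ∘ ε† = e^{iσ} · δ ∘ ε†, where σ_{H,H} is the swap and ε† the adjoint of ε), and ε† ≠ 0, then e^{iσ} = 1. -/
open Matrix BigOperators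

/-- If `δ, ε` satisfy both unit laws exactly and symmetry up to a phase `z` of
modulus 1 (`σ ∘ δ ∘ ε† = z • δ ∘ ε†`, where `ε† = star ∘ ε` is the adjoint
state), with `ε† ≠ 0`, then `z = 1`. -/
theorem stmt9 {h : Type*} [Fintype h] [DecidableEq h] [Nonempty h]
    (δ : Matrix (h × h) h ℂ) (ε : h → ℂ) (z : ℂ) (hz : ‖z‖ = 1)
    (hεd : (fun x => star (ε x)) ≠ (0 : h → ℂ))
    (hlu : leftUnit δ ε = 1)
    (hru : rightUnit δ ε = 1)
    (hsymm : (fun p : h × h => (δ *ᵥ fun x => star (ε x)) (p.2, p.1))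
      = z • (δ *ᵥ fun x => star (ε x))) :
    z = 1 := by
  set v : h × h → ℂ := δ *ᵥ fun x => star (ε x) with hv
  -- pick x with ε†(x) ≠ 0
  obtain ⟨x, hx⟩ : ∃ x, star (ε x) ≠ 0 := by
    by_contra hc
    push_neg at hc
    exact hεd (funext fun x => hc x)
  have hsymm' : ∀ a b : h, v (b, a) = z * v (a, b) := by
    intro a b
    have := congrFun hsymm (a, b)
    simpa using this
  have key : ∀ M : Matrix h h ℂ, M = 1 → ∑ a, M x a * star (ε a) = star (ε x) := by
    intro M hM
    subst hM
    simp [Matrix.one_apply, Finset.sum_ite_eq]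
  have hL : ∑ c, ε c * v (c, x) = star (ε x) := by
    have := key (leftUnit δ ε) hlu
    rw [← this]
    simp only [leftUnit, Matrix.of_apply, hv, Matrix.mulVec, dotProduct,
      Finset.sum_mul, Finset.mul_sum]
    rw [Finset.sum_comm]
    congr 1; ext a; congr 1; ext c; ring
  have hR : ∑ c, ε c * v (x, c) = star (ε x) := by
    have := key (rightUnit δ ε) hru
    rw [← this]
    simp only [rightUnit, Matrix.of_apply, hv, Matrix.mulVec, dotProduct,
      Finset.sum_mul, Finset.mul_sum]
    rw [Finset.sum_comm]
    congr 1; ext a; congr 1; ext c; ring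
  have : star (ε x) = z * star (ε x) := by
    calc star (ε x) = ∑ c, ε c * v (c, x) := hL.symm
    _ = ∑ c, ε c * (z * v (x, c)) := by
        congr 1; ext c; rw [hsymm' x c]
    _ = z * ∑ c, ε c * v (x, c) := by rw [Finset.mul_sum]; congr 1; ext c; ring
    _ = z * star (ε x) := by rw [hR]
  have hzero : (z - 1) * star (ε x) = 0 := by linear_combination -this
  rcases mul_eq_zero.mp hzero with h1 | h2
  · exact sub_eq_zero.mp h1
  · exact absurd h2 hx
end

section
/- If δ : H → H ⊗ H and ε : H → ℂ satisfy the unit laws exactly and the Frobenius law up to a phase ((δ† ⊗ id) ∘ (id ⊗ δ) = e^{iφ} (id ⊗ δ†) ∘ (δ ⊗ id)), then e^{iφ} = 1, i.e. the Frobenius law holds exactly. -/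
open Matrix Kronecker BigOperators

/-- The Frobenius composite `(δ† ⊗ id) ∘ (id ⊗ δ) : H ⊗ H → H ⊗ H`. -/
noncomputable def frobL {h : Type*} [Fintype h] [DecidableEq h]
    (δ : Matrix (h × h) h ℂ) : Matrix (h × h) (h × h) ℂ :=
  (δᴴ ⊗ₖ (1 : Matrix h h ℂ)) *
    Matrix.reindex (Equiv.prodAssoc h h h).symm (Equiv.refl (h × h))
      ((1 : Matrix h h ℂ) ⊗ₖ δ)

/-- The Frobenius composite `(id ⊗ δ†) ∘ (δ ⊗ id) : H ⊗ H → H ⊗ H`. -/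
noncomputable def frobR {h : Type*} [Fintype h] [DecidableEq h]
    (δ : Matrix (h × h) h ℂ) : Matrix (h × h) (h × h) ℂ :=
  ((1 : Matrix h h ℂ) ⊗ₖ δᴴ) *
    Matrix.reindex (Equiv.prodAssoc h h h) (Equiv.refl (h × h))
      (δ ⊗ₖ (1 : Matrix h h ℂ))

lemma frobL_apply {h : Type*} [Fintype h] [DecidableEq h] (δ : Matrix (h × h) h ℂ) (a b c d : h) :
    frobL δ (a,b) (c,d) = ∑ q, star (δ (c,q) a) * δ (q,b) d := by
  simp [frobL, mul_apply, Fintype.sum_prod_type, one_apply, Finset.mul_sum,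
    Finset.sum_comm, Equiv.prodAssoc, mul_comm, mul_assoc, mul_left_comm]

lemma frobR_apply {h : Type*} [Fintype h] [DecidableEq h] (δ : Matrix (h × h) h ℂ) (a b c d : h) :
    frobR δ (a,b) (c,d) = ∑ q, star (δ (q,d) b) * δ (a,q) c := by
  simp [frobR, mul_apply, Fintype.sum_prod_type, one_apply, Finset.mul_sum,
    Finset.sum_comm, Equiv.prodAssoc, mul_comm, mul_assoc, mul_left_comm]

/-- If `δ, ε` satisfy the unit laws exactly and the Frobenius law up to a phase
`z` of modulus 1, then `z = 1`: the Frobenius law holds exactly. -/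
theorem stmt10 {h : Type*} [Fintype h] [DecidableEq h] [Nonempty h]
    (δ : Matrix (h × h) h ℂ) (ε : h → ℂ) (z : ℂ) (hz : ‖z‖ = 1)
    (hlu : leftUnit δ ε = 1)
    (hru : rightUnit δ ε = 1)
    (hfrob : frobL δ = z • frobR δ) :
    z = 1 := by
  obtain ⟨x⟩ := ‹Nonempty h›
  have hl : ∀ p q : h, ∑ c, ε c * δ (c, p) q = (1 : Matrix h h ℂ) p q := by
    intro p q; exact congrFun (congrFun hlu p) q
  have hr : ∀ p q : h, ∑ c, ε c * δ (p, c) q = (1 : Matrix h h ℂ) p q := by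
    intro p q; exact congrFun (congrFun hru p) q
  -- contract frobL
  have SL : ∑ a, ∑ c, ε a * star (ε c) * frobL δ (a,x) (c,x) = 1 := by
    simp only [frobL_apply]
    have step : ∀ a, ∑ c, ε a * star (ε c) * ∑ q, star (δ (c,q) a) * δ (q,x) x
        = ε a * δ (a,x) x := by
      intro a
      simp only [Finset.mul_sum]
      rw [Finset.sum_comm]
      have : ∀ q, ∑ c, ε a * star (ε c) * (star (δ (c,q) a) * δ (q,x) x)
          = ε a * star ((1 : Matrix h h ℂ) q a) * δ (q,x) x := by
        intro q
        rw [← hl q a, star_sum, Finset.mul_sum, Finset.sum_mul]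
        refine Finset.sum_congr rfl fun c _ => ?_
        rw [star_mul']
        ring
      simp only [this, one_apply]
      simp [Finset.sum_ite_eq, ite_mul, mul_ite]
    simp only [step]
    rw [hl x x]
    simp
  -- contract frobR
  have SR : ∑ a, ∑ c, ε a * star (ε c) * frobR δ (a,x) (c,x) = 1 := by
    simp only [frobR_apply]
    rw [Finset.sum_comm]
    have step : ∀ c, ∑ a, ε a * star (ε c) * ∑ q, star (δ (q,x) x) * δ (a,q) c
        = star (ε c) * star (δ (c,x) x) := by
      intro c
      simp only [Finset.mul_sum]
      rw [Finset.sum_comm]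
      have : ∀ q, ∑ a, ε a * star (ε c) * (star (δ (q,x) x) * δ (a,q) c)
          = star (ε c) * star (δ (q,x) x) * (1 : Matrix h h ℂ) q c := by
        intro q
        rw [← hl q c, Finset.mul_sum]
        refine Finset.sum_congr rfl fun a _ => ?_
        ring
      simp only [this, one_apply]
      simp [Finset.sum_ite_eq, ite_mul, mul_ite]
    simp only [step]
    have : ∀ c : h, star (ε c) * star (δ (c,x) x) = star (ε c * δ (c,x) x) := by
      intro c; rw [star_mul']
    simp only [this]
    rw [← star_sum, hl x x]
    simp
  -- conclude
  have hzz : ∑ a, ∑ c, ε a * star (ε c) * frobL δ (a,x) (c,x)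
      = z * ∑ a, ∑ c, ε a * star (ε c) * frobR δ (a,x) (c,x) := by
    rw [Finset.mul_sum]
    refine Finset.sum_congr rfl fun a _ => ?_
    rw [Finset.mul_sum]
    refine Finset.sum_congr rfl fun c _ => ?_
    rw [hfrob]
    simp [Matrix.smul_apply]
    ring
  rw [SL, SR, mul_one] at hzz
  exact hzz.symm
end
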